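/- arXiv:1708.09046 — 3 statements merged into one kernel-verified Lean document; each statement's English description precedes it below -/
import Mathlib

section
/- Let α ∈ (0,1) and let J be a finite set of jobs that is feasible on m* machines. Let S_1, S_2, …, S_N ⊆ J, with N = ⌈2m*/α⌉, be pairwise disjoint sets of α-tight jobs with S_1 non-empty and nested lifespan unions I(S_1) ⊆ I(S_2) ⊆ … ⊆ I(S_N). Then 32·(1−α)·|I(S_N)| ≥ |I(S_1)|. -/
open MeasureTheory Set

/-- A job with release time `r`, size `p > 0` and deadline `d`, satisfying `r + p ≤ d`. -/
structure Job where
  r : ℝ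
  p : ℝ
  d : ℝ
  p_pos : 0 < p
  fits : r + p ≤ d

namespace Job

/-- The lifespan `I(j) = [r_j, d_j]` of a job. -/
def lifespan (j : Job) : Set ℝ := Set.Icc j.r j.d

/-- The length `|I(j)| = d_j - r_j` of the lifespan of a job. -/
def len (j : Job) : ℝ := j.d - j.r

/-- The laxity `ℓ_j = d_j - r_j - p_j` of a job. -/
def laxity (j : Job) : ℝ := j.d - j.r - j.p

/-- A job is `α`-tight if `p_j ≥ α·|I(j)|`. -/
def IsTight (α : ℝ) (j : Job) : Prop := α * j.len ≤ j.p

end Job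

/-- `P` is a schedule of the jobs `job j`, `j ∈ J`, on `m` machines:
each job is processed on a measurable subset of its lifespan, and at every time
at most `m` jobs are processed simultaneously. -/
def IsSchedule {ι : Type*} (J : Finset ι) (job : ι → Job) (m : ℕ) (P : ι → Set ℝ) : Prop :=
  (∀ j ∈ J, MeasurableSet (P j)) ∧
  (∀ j ∈ J, P j ⊆ (job j).lifespan) ∧
  (∀ t : ℝ, ∀ S : Finset ι, S ⊆ J → (∀ j ∈ S, t ∈ P j) → S.card ≤ m)

/-- The jobs `job j`, `j ∈ J`, are feasible on `m` machines: there is a schedule on `m`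
machines processing every job for exactly `p_j` time units. -/
def FeasibleOn {ι : Type*} (J : Finset ι) (job : ι → Job) (m : ℕ) : Prop :=
  ∃ P : ι → Set ℝ, IsSchedule J job m P ∧
    ∀ j ∈ J, volume (P j) = ENNReal.ofReal (job j).p

/-- `T ⊆ ℝ` is a finite union of (closed) time intervals. -/
def FiniteUnionOfIntervals (T : Set ℝ) : Prop :=
  ∃ s : Finset (ℝ × ℝ), T = ⋃ q ∈ s, Set.Icc q.1 q.2

/-!
Thin each `S i` to a subfamily `T i` with the same lifespan union in which every time lies in at
most two lifespans, so that `∑_{T i} |I(j)| ≤ 2 |I(S_i)| ≤ 2 |I(S_N)|`. Inside the window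
`W = I(S_1) ⊆ I(S_i)` a job misses at most its laxity `ℓ_j ≤ (1 - α) |I(j)|`, so the jobs of `T i`
are processed for at least `|W| - 2 (1 - α) |I(S_N)|` inside `W`. The `T i` are disjoint and at
most `m*` jobs run at any time, whence `N (|W| - 2 (1 - α) |I(S_N)|) ≤ m* |W|`; as `N ≥ 2 m*` this
gives `|I(S_1)| ≤ 4 (1 - α) |I(S_N)|`.
-/

open Finset
open scoped ENNReal

section IntervalCover

variable {ι α : Type*} [LinearOrder α]

theorem Set.Icc_subset_Icc_union_Icc_of_mem {a b a₁ b₁ a₂ b₂ x : α}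
    (hx₁ : x ∈ Icc a₁ b₁) (hx₂ : x ∈ Icc a₂ b₂) (ha : a₁ ≤ a) (hb : b ≤ b₂) :
    Icc a b ⊆ Icc a₁ b₁ ∪ Icc a₂ b₂ :=
  calc Icc a b ⊆ Icc a₁ b₂ := Icc_subset_Icc ha hb
    _ ⊆ Icc a₁ x ∪ Icc x b₂ := Icc_subset_Icc_union_Icc
    _ ⊆ Icc a₁ b₁ ∪ Icc a₂ b₂ := union_subset_union (Icc_subset_Icc le_rfl hx₁.2)
        (Icc_subset_Icc hx₂.1 le_rfl)

/-- Among three intervals through a common point, the one with neither the leftmost left end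
nor the rightmost right end is covered by the other two. -/
theorem card_filter_mem_Icc_le_two [DecidableEq ι] (a b : ι → α) {s : Finset ι}
    (hirred : ∀ j ∈ s, ¬ Icc (a j) (b j) ⊆ ⋃ k ∈ s.erase j, Icc (a k) (b k)) (x : α) :
    #{j ∈ s | x ∈ Icc (a j) (b j)} ≤ 2 := by
  set F := {j ∈ s | x ∈ Icc (a j) (b j)}
  by_contra! hF
  obtain ⟨jl, hjl, hjl_min⟩ := F.exists_min_image a (card_pos.mp (by omega))
  obtain ⟨jr, hjr, hjr_max⟩ := F.exists_max_image b (card_pos.mp (by omega))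
  obtain ⟨j, hj⟩ : (F \ {jl, jr}).Nonempty := by
    have := card_le_card_sdiff_add_card (s := F) (t := {jl, jr})
    have := card_le_two (a := jl) (b := jr)
    exact card_pos.mp (by omega)
  simp only [Finset.mem_sdiff, Finset.mem_insert, Finset.mem_singleton, not_or] at hj
  obtain ⟨hjF, hjl_ne, hjr_ne⟩ := hj
  have hs : ∀ k ∈ F, k ∈ s := fun k hk => (mem_filter.1 hk).1
  have hx : ∀ k ∈ F, x ∈ Icc (a k) (b k) := fun k hk => (mem_filter.1 hk).2
  have hothers : ∀ k ∈ F, k ≠ j → Icc (a k) (b k) ⊆ ⋃ k ∈ s.erase j, Icc (a k) (b k) :=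
    fun k hk hkj => subset_set_biUnion_of_mem (f := fun k => Icc (a k) (b k))
      (mem_erase.2 ⟨hkj, hs k hk⟩)
  exact hirred j (hs j hjF) ((Icc_subset_Icc_union_Icc_of_mem (hx jl hjl) (hx jr hjr)
    (hjl_min j hjF) (hjr_max j hjF)).trans
    (union_subset (hothers jl hjl (Ne.symm hjl_ne)) (hothers jr hjr (Ne.symm hjr_ne))))

theorem exists_subset_biUnion_Icc_eq_card_filter_le_two (a b : ι → α) (s : Finset ι) :
    ∃ t ⊆ s, ⋃ j ∈ t, Icc (a j) (b j) = ⋃ j ∈ s, Icc (a j) (b j) ∧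
      ∀ x, #{j ∈ t | x ∈ Icc (a j) (b j)} ≤ 2 := by
  classical
  induction s using Finset.strongInduction with
  | H s ih =>
    by_cases hred : ∃ j ∈ s, Icc (a j) (b j) ⊆ ⋃ k ∈ s.erase j, Icc (a k) (b k)
    · obtain ⟨j, hj, hcov⟩ := hred
      obtain ⟨t, hts, hunion, hply⟩ := ih (s.erase j) (erase_ssubset hj)
      refine ⟨t, hts.trans (erase_subset _ _), ?_, hply⟩
      rw [hunion, ← insert_erase hj, set_biUnion_insert, union_eq_self_of_subset_left hcov,
        erase_insert (notMem_erase j s)]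
    · push Not at hred
      exact ⟨s, subset_rfl, rfl, card_filter_mem_Icc_le_two a b hred⟩

end IntervalCover

section Measure

variable {ι Ω : Type*} [MeasurableSpace Ω] (μ : Measure Ω)

theorem sum_measure_le_mul_measure_of_card_le {t : Finset ι} {A : ι → Set Ω} {B : Set Ω} {k : ℕ}
    (hA : ∀ j ∈ t, MeasurableSet (A j)) (hAB : ∀ j ∈ t, A j ⊆ B) (hB : MeasurableSet B)
    (hk : ∀ x, ∀ u ⊆ t, (∀ j ∈ u, x ∈ A j) → #u ≤ k) :
    ∑ j ∈ t, μ (A j) ≤ k * μ B := by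
  classical
  have hpoint : ∀ x, ∑ j ∈ t, (A j).indicator 1 x ≤ (k : ℝ≥0∞) * B.indicator 1 x := by
    intro x
    by_cases hx : x ∈ B
    · simpa [Set.indicator_apply, hx] using
        hk x {j ∈ t | x ∈ A j} (filter_subset _ _) (fun j hj => (mem_filter.mp hj).2)
    · have : ∀ j ∈ t, x ∉ A j := fun j hj hxA => hx (hAB j hj hxA)
      simp_all
  calc ∑ j ∈ t, μ (A j) = ∫⁻ x, ∑ j ∈ t, (A j).indicator 1 x ∂μ := by
        rw [lintegral_finsetSum _ fun j hj => measurable_one.indicator (hA j hj)]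
        exact sum_congr rfl fun j hj => (lintegral_indicator_one (hA j hj)).symm
    _ ≤ ∫⁻ x, (k : ℝ≥0∞) * B.indicator 1 x ∂μ := lintegral_mono hpoint
    _ = k * μ B := by rw [lintegral_const_mul' _ _ (by simp), lintegral_indicator_one hB]

theorem measure_inter_add_le_measure_inter_add {P I W : Set Ω} (hPI : P ⊆ I)
    (hW : MeasurableSet W) : μ (I ∩ W) + μ P ≤ μ (P ∩ W) + μ I :=
  calc μ (I ∩ W) + μ P ≤ μ (I ∩ W) + (μ (P ∩ W) + μ (I \ W)) := by
        gcongr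
        exact (measure_le_inter_add_sdiff μ P W).trans (by gcongr)
    _ = μ (P ∩ W) + μ I := by rw [← measure_inter_add_sdiff I hW]; ring

end Measure

namespace Job

variable (j : Job) {α : ℝ}

theorem laxity_nonneg : 0 ≤ j.laxity := by
  have := j.fits; unfold laxity; linarith

theorem len_nonneg : 0 ≤ j.len := by
  have := j.fits; have := j.p_pos; unfold len; linarith

theorem volume_lifespan : volume j.lifespan = ENNReal.ofReal j.len := Real.volume_Icc

theorem volume_lifespan_eq_add : volume j.lifespan = .ofReal j.p + .ofReal j.laxity := by
  rw [volume_lifespan, ← ENNReal.ofReal_add j.p_pos.le j.laxity_nonneg, len, laxity]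
  ring_nf

variable {j}

theorem IsTight.ofReal_laxity_le (h : j.IsTight α) :
    .ofReal j.laxity ≤ .ofReal (1 - α) * volume j.lifespan := by
  rw [volume_lifespan, ← ENNReal.ofReal_mul' j.len_nonneg]
  unfold IsTight at h
  exact ENNReal.ofReal_le_ofReal (by unfold laxity len at *; linarith)

theorem IsTight.volume_lifespan_inter_le (h : j.IsTight α) {P W : Set ℝ}
    (hP : P ⊆ j.lifespan) (hPvol : volume P = .ofReal j.p) (hW : MeasurableSet W) :
    volume (j.lifespan ∩ W) ≤ volume (P ∩ W) + .ofReal (1 - α) * volume j.lifespan := by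
  have key := measure_inter_add_le_measure_inter_add volume hP hW
  rw [hPvol, volume_lifespan_eq_add, ← add_assoc, add_right_comm] at key
  exact (ENNReal.le_of_add_le_add_right ENNReal.ofReal_ne_top key).trans
    (by gcongr; exact h.ofReal_laxity_le)

end Job

/-- The paper's `I(S)`. -/
def lifespanUnion {ι : Type*} (job : ι → Job) (S : Finset ι) : Set ℝ := ⋃ j ∈ S, (job j).lifespan

section Schedule

variable {ι : Type*} (job : ι → Job)

theorem measurableSet_lifespanUnion (S : Finset ι) : MeasurableSet (lifespanUnion job S) :=
  S.measurableSet_biUnion fun _ _ => measurableSet_Icc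

theorem volume_lifespanUnion_ne_top (S : Finset ι) : volume (lifespanUnion job S) ≠ ∞ :=
  ((measure_biUnion_finset_le _ _).trans_lt <| ENNReal.sum_lt_top.2 fun j _ => by
    rw [Job.volume_lifespan]; exact ENNReal.ofReal_lt_top).ne

theorem exists_subset_sum_volume_lifespan_le (S : Finset ι) :
    ∃ T ⊆ S, lifespanUnion job T = lifespanUnion job S ∧
      ∑ j ∈ T, volume (job j).lifespan ≤ 2 * volume (lifespanUnion job S) := by
  obtain ⟨T, hTS, hTU, hply⟩ :=
    exists_subset_biUnion_Icc_eq_card_filter_le_two (fun j => (job j).r) (fun j => (job j).d) S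
  refine ⟨T, hTS, hTU, ?_⟩
  rw [← show lifespanUnion job T = lifespanUnion job S from hTU]
  exact sum_measure_le_mul_measure_of_card_le volume (fun _ _ => measurableSet_Icc)
    (fun _ hj => subset_set_biUnion_of_mem (f := fun k => (job k).lifespan) hj)
    (measurableSet_lifespanUnion job T)
    fun x u hu hx => (Finset.card_le_card (t := {j ∈ T | x ∈ Icc (job j).r (job j).d})
      fun j hj => mem_filter.2 ⟨hu hj, hx j hj⟩).trans (hply x)

variable {job}

theorem exists_subset_volume_le_sum_volume_inter_add {α : ℝ} {P : ι → Set ℝ} {S : Finset ι}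
    (htight : ∀ j ∈ S, (job j).IsTight α) (hP : ∀ j ∈ S, P j ⊆ (job j).lifespan)
    (hPvol : ∀ j ∈ S, volume (P j) = .ofReal (job j).p) {W : Set ℝ} (hW : MeasurableSet W)
    (hWS : W ⊆ lifespanUnion job S) :
    ∃ T ⊆ S, volume W ≤
      ∑ j ∈ T, volume (P j ∩ W) + .ofReal (1 - α) * (2 * volume (lifespanUnion job S)) := by
  obtain ⟨T, hTS, hTU, hTsum⟩ := exists_subset_sum_volume_lifespan_le job S
  refine ⟨T, hTS, ?_⟩
  have hcover : W ⊆ ⋃ j ∈ T, (job j).lifespan ∩ W := fun x hx => by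
    have hxT : x ∈ lifespanUnion job T := hTU ▸ hWS hx
    simp only [lifespanUnion, mem_iUnion] at hxT ⊢
    obtain ⟨j, hj, hxj⟩ := hxT
    exact ⟨j, hj, hxj, hx⟩
  calc volume W ≤ ∑ j ∈ T, volume ((job j).lifespan ∩ W) :=
        (measure_mono hcover).trans (measure_biUnion_finset_le _ _)
    _ ≤ ∑ j ∈ T, (volume (P j ∩ W) + .ofReal (1 - α) * volume (job j).lifespan) :=
        sum_le_sum fun j hj => (htight j (hTS hj)).volume_lifespan_inter_le (hP j (hTS hj))
          (hPvol j (hTS hj)) hW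
    _ = ∑ j ∈ T, volume (P j ∩ W) + .ofReal (1 - α) * ∑ j ∈ T, volume (job j).lifespan := by
        rw [sum_add_distrib, mul_sum]
    _ ≤ _ := by gcongr

theorem IsSchedule.sum_volume_inter_le {J : Finset ι} {m : ℕ} {P : ι → Set ℝ}
    (hP : IsSchedule J job m P) {T : Finset ι} (hT : T ⊆ J) {W : Set ℝ} (hW : MeasurableSet W) :
    ∑ j ∈ T, volume (P j ∩ W) ≤ m * volume W :=
  sum_measure_le_mul_measure_of_card_le volume (fun j hj => (hP.1 j (hT hj)).inter hW)
    (fun _ _ => inter_subset_right) hW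
    fun x u hu hx => hP.2.2 x u (hu.trans hT) fun j hj => (hx j hj).1

theorem IsSchedule.card_mul_volume_le {κ : Type*} {J : Finset ι} {m : ℕ} {P : ι → Set ℝ}
    (hP : IsSchedule J job m P) (hPvol : ∀ j ∈ J, volume (P j) = .ofReal (job j).p) {α : ℝ}
    {K : Finset κ} {S : κ → Finset ι} (hSJ : ∀ i ∈ K, S i ⊆ J)
    (htight : ∀ i ∈ K, ∀ j ∈ S i, (job j).IsTight α) (hdisj : (K : Set κ).PairwiseDisjoint S)
    {W : Set ℝ} (hW : MeasurableSet W) (hWS : ∀ i ∈ K, W ⊆ lifespanUnion job (S i))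
    {D : ℝ≥0∞} (hD : ∀ i ∈ K, volume (lifespanUnion job (S i)) ≤ D) :
    #K * volume W ≤ m * volume W + #K * (.ofReal (1 - α) * (2 * D)) := by
  classical
  have hwindow : ∀ i ∈ K, ∃ T ⊆ S i,
      volume W ≤ ∑ j ∈ T, volume (P j ∩ W) + .ofReal (1 - α) * (2 * D) := fun i hi => by
    obtain ⟨T, hTS, hT⟩ := exists_subset_volume_le_sum_volume_inter_add (htight i hi)
      (fun j hj => hP.2.1 j (hSJ i hi hj)) (fun j hj => hPvol j (hSJ i hi hj)) hW (hWS i hi)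
    exact ⟨T, hTS, hT.trans (by gcongr; exact hD i hi)⟩
  choose! T hTS hT using hwindow
  have hload : ∑ i ∈ K, ∑ j ∈ T i, volume (P j ∩ W) ≤ m * volume W := by
    rw [← sum_biUnion fun i hi k hk hik => (hdisj hi hk hik).mono (hTS i hi) (hTS k hk)]
    exact hP.sum_volume_inter_le (biUnion_subset.2 fun i hi => (hTS i hi).trans (hSJ i hi)) hW
  calc #K * volume W = ∑ i ∈ K, volume W := by simp
    _ ≤ ∑ i ∈ K, (∑ j ∈ T i, volume (P j ∩ W) + .ofReal (1 - α) * (2 * D)) := sum_le_sum hT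
    _ = ∑ i ∈ K, ∑ j ∈ T i, volume (P j ∩ W) + #K * (.ofReal (1 - α) * (2 * D)) := by
        rw [sum_add_distrib]; simp
    _ ≤ _ := by gcongr

end Schedule

theorem ENNReal.le_two_mul_of_nat_mul_le {L X : ℝ≥0∞} {m N : ℕ} (hN : N ≠ 0) (hmN : 2 * m ≤ N)
    (hL : L ≠ ∞) (h : N * L ≤ m * L + N * X) : L ≤ 2 * X := by
  have hNL : (N : ℝ≥0∞) * L ≠ ∞ := ENNReal.mul_ne_top (ENNReal.natCast_ne_top N) hL
  have : N * L + N * L ≤ N * L + N * (2 * X) :=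
    calc N * L + N * L = 2 * (N * L) := by ring
      _ ≤ 2 * (m * L) + 2 * (N * X) := by rw [← mul_add]; gcongr
      _ = ((2 * m : ℕ) : ℝ≥0∞) * L + N * (2 * X) := by push_cast; ring
      _ ≤ N * L + N * (2 * X) := by gcongr
  exact (ENNReal.mul_le_mul_iff_right (by exact_mod_cast hN) (ENNReal.natCast_ne_top N)).1
    (ENNReal.le_of_add_le_add_left hNL this)

theorem gamma_lower_bound_general {ι : Type*} (J : Finset ι) (job : ι → Job) (α : ℝ)
    (mstar N : ℕ) (S : ℕ → Finset ι)
    (hα : α ∈ Set.Ioo (0 : ℝ) 1)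
    (hfeas : FeasibleOn J job mstar)
    (hN : N = ⌈(2 * (mstar : ℝ)) / α⌉₊)
    (hN1 : 1 ≤ N)
    (hsub : ∀ i ∈ Finset.Icc 1 N, S i ⊆ J)
    (htight : ∀ i ∈ Finset.Icc 1 N, ∀ j ∈ S i, (job j).IsTight α)
    (hdisj : ∀ i ∈ Finset.Icc 1 N, ∀ k ∈ Finset.Icc 1 N, i ≠ k → Disjoint (S i) (S k))
    (hnest : ∀ i, 1 ≤ i → i < N →
      (⋃ j ∈ S i, (job j).lifespan) ⊆ ⋃ j ∈ S (i + 1), (job j).lifespan) :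
    (volume (⋃ j ∈ S 1, (job j).lifespan)).toReal ≤
      32 * (1 - α) * (volume (⋃ j ∈ S N, (job j).lifespan)).toReal := by
  obtain ⟨hα0, hα1⟩ := hα
  obtain ⟨P, hP, hPvol⟩ := hfeas
  set U := fun i => lifespanUnion job (S i)
  have hmono : MonotoneOn U (Finset.Icc 1 N) := by
    rw [Finset.coe_Icc]
    refine monotoneOn_of_le_succ ordConnected_Icc fun i _ hi hi' => ?_
    rw [Order.succ_eq_add_one, Set.mem_Icc] at hi'
    exact hnest i hi.1 (by omega)
  have hload := hP.card_mul_volume_le hPvol hsub htight hdisj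
    (measurableSet_lifespanUnion job (S 1))
    (fun i hi => hmono (by simp [hN1]) hi (Finset.mem_Icc.1 hi).1)
    (fun i hi => measure_mono (hmono hi (by simp [hN1]) (Finset.mem_Icc.1 hi).2))
  rw [Nat.card_Icc, add_tsub_cancel_right] at hload
  have h2m : 2 * mstar ≤ N := by
    have : (2 * mstar : ℝ) ≤ N :=
      hN ▸ (le_div_self (by positivity) hα0 hα1.le).trans (Nat.le_ceil _)
    exact_mod_cast this
  have hL := ENNReal.le_two_mul_of_nat_mul_le (by omega) h2m
    (volume_lifespanUnion_ne_top _ _) hload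
  have hD : volume (U N) ≠ ∞ := volume_lifespanUnion_ne_top _ _
  calc (volume (U 1)).toReal
      ≤ (2 * (.ofReal (1 - α) * (2 * volume (U N)))).toReal :=
        ENNReal.toReal_mono (by simp [ENNReal.mul_eq_top, hD]) hL
    _ = 4 * (1 - α) * (volume (U N)).toReal := by
        simp only [ENNReal.toReal_mul, ENNReal.toReal_ofReal (sub_nonneg.2 hα1.le)]; norm_num; ring
    _ ≤ 32 * (1 - α) * (volume (U N)).toReal := by gcongr; linarith

/-- Lemma: for pairwise disjoint sets `S_1, …, S_N` of `α`-tight jobs, `N = ⌈2m*/α⌉`, with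
`S_1` non-empty and nested lifespan unions `I(S_1) ⊆ … ⊆ I(S_N)`, where the whole instance
is feasible on `m*` machines, we have `32·(1-α)·|I(S_N)| ≥ |I(S_1)|`. -/
theorem gamma_lower_bound {ι : Type*} (J : Finset ι) (job : ι → Job) (α : ℝ)
    (mstar N : ℕ) (S : ℕ → Finset ι)
    (hα : α ∈ Set.Ioo (0 : ℝ) 1)
    (hfeas : FeasibleOn J job mstar)
    (hN : N = ⌈(2 * (mstar : ℝ)) / α⌉₊)
    (hN1 : 1 ≤ N)
    (hsub : ∀ i ∈ Finset.Icc 1 N, S i ⊆ J)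
    (htight : ∀ i ∈ Finset.Icc 1 N, ∀ j ∈ S i, (job j).IsTight α)
    (hdisj : ∀ i ∈ Finset.Icc 1 N, ∀ k ∈ Finset.Icc 1 N, i ≠ k → Disjoint (S i) (S k))
    (hnest : ∀ i, 1 ≤ i → i < N →
      (⋃ j ∈ S i, (job j).lifespan) ⊆ ⋃ j ∈ S (i + 1), (job j).lifespan)
    (hS1 : (S 1).Nonempty) :
    (volume (⋃ j ∈ S 1, (job j).lifespan)).toReal ≤
      32 * (1 - α) * (volume (⋃ j ∈ S N, (job j).lifespan)).toReal :=
  gamma_lower_bound_general J job α mstar N S hα hfeas hN hN1 hsub htight hdisj hnest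
end

section
/- For every finite family F of non-degenerate closed intervals of the real line there exists a subfamily F' ⊆ F such that the union of the intervals in F' equals the union of the intervals in F, and every real number belongs to at most two intervals of F'. -/
open Set

/-- From every finite family of non-degenerate closed intervals one can select a subfamily
with the same union in which every point is covered at most twice. -/
theorem exists_two_cover_subfamily (F : Finset (ℝ × ℝ)) (hF : ∀ q ∈ F, q.1 < q.2) :
    ∃ F' ⊆ F, (⋃ q ∈ F', Set.Icc q.1 q.2) = (⋃ q ∈ F, Set.Icc q.1 q.2) ∧
      ∀ t : ℝ, ∀ S ⊆ F', (∀ q ∈ S, t ∈ Set.Icc q.1 q.2) → S.card ≤ 2 := by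
  classical
  obtain ⟨F', hF'mem, hmin⟩ := Finset.exists_min_image
    (F.powerset.filter (fun G => (⋃ q ∈ G, Set.Icc q.1 q.2) = (⋃ q ∈ F, Set.Icc q.1 q.2)))
    Finset.card ⟨F, by simp⟩
  simp only [Finset.mem_filter, Finset.mem_powerset] at hF'mem
  obtain ⟨hsub, hunion⟩ := hF'mem
  refine ⟨F', hsub, hunion, ?_⟩
  intro t S hS hmemS
  by_contra hcard
  push_neg at hcard
  have hS3 : 3 ≤ S.card := hcard
  have hSne : S.Nonempty := Finset.card_pos.mp (by omega)
  obtain ⟨i, hiS, hi⟩ := Finset.exists_min_image S Prod.fst hSne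
  obtain ⟨j, hjS, hj⟩ := Finset.exists_max_image S Prod.snd hSne
  -- find k in S different from i and j
  have hk : ∃ k ∈ S, k ≠ i ∧ k ≠ j := by
    by_contra hk
    push_neg at hk
    have : S ⊆ {i, j} := by
      intro x hx
      rcases Classical.em (x = i) with h | h
      · simp [h]
      · simp [hk x hx h]
    have := Finset.card_le_card this
    have h2 : ({i, j} : Finset (ℝ × ℝ)).card ≤ 2 := (Finset.card_insert_le _ _).trans (by simp)
    have : S.card ≤ 2 := this.trans h2
    omega
  obtain ⟨k, hkS, hki, hkj⟩ := hk
  have hkF' : k ∈ F' := hS hkS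
  -- union over F'.erase k equals union over F'
  have herase : (⋃ q ∈ F'.erase k, Set.Icc q.1 q.2) = (⋃ q ∈ F', Set.Icc q.1 q.2) := by
    apply subset_antisymm
    · exact Set.biUnion_subset_biUnion_left (fun x hx => Finset.mem_of_mem_erase hx)
    · intro x hx
      simp only [Set.mem_iUnion, exists_prop] at hx ⊢
      obtain ⟨q, hqF', hxq⟩ := hx
      by_cases hqk : q = k
      · subst hqk
        have htq := hmemS q hkS
        have hti := hmemS i hiS
        have htj := hmemS j hjS
        rcases le_total x t with hxt | htx
        · exact ⟨i, Finset.mem_erase.mpr ⟨Ne.symm hki, hS hiS⟩,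
            ⟨le_trans (hi q hkS) hxq.1, le_trans hxt hti.2⟩⟩
        · exact ⟨j, Finset.mem_erase.mpr ⟨Ne.symm hkj, hS hjS⟩,
            ⟨le_trans htj.1 htx, le_trans hxq.2 (hj q hkS)⟩⟩
      · exact ⟨q, Finset.mem_erase.mpr ⟨hqk, hqF'⟩, hxq⟩
  have hle := hmin (F'.erase k) (by
    simp only [Finset.mem_filter, Finset.mem_powerset]
    exact ⟨(Finset.erase_subset _ _).trans hsub, herase.trans hunion⟩)
  have := Finset.card_erase_of_mem hkF'
  have hpos : 0 < F'.card := Finset.card_pos.mpr ⟨k, hkF'⟩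
  omega
end

section
/- Let α ∈ (0,1), let j be an α-tight job, and let T ⊆ ℝ be Lebesgue-measurable with |I(j) ∩ T| ≥ 4·(1−α)·|I(j)|. Then for every Lebesgue-measurable set P_j ⊆ I(j) with |P_j| = p_j, one has |P_j ∩ T| ≥ (3/4)·|I(j) ∩ T|. In words: any feasible schedule must process job j during T for at least three quarters of |I(j) ∩ T|. -/
open MeasureTheory Set

/-- If `j` is `α`-tight and `|I(j) ∩ T| ≥ 4(1-α)|I(j)|`, then any schedule completing `j`
processes `j` during `T` for at least `(3/4)·|I(j) ∩ T|` time units. -/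
theorem work_in_T_three_quarters (α : ℝ) (hα : α ∈ Set.Ioo (0 : ℝ) 1)
    (j : Job) (hj : j.IsTight α)
    (T : Set ℝ) (hT : MeasurableSet T)
    (hTI : 4 * (1 - α) * j.len ≤ (volume (j.lifespan ∩ T)).toReal)
    (P : Set ℝ) (hPm : MeasurableSet P) (hPI : P ⊆ j.lifespan)
    (hP : volume P = ENNReal.ofReal j.p) :
    (3 / 4 : ℝ) * (volume (j.lifespan ∩ T)).toReal ≤ (volume (P ∩ T)).toReal := by
  obtain ⟨hα0, hα1⟩ := hα
  have hpL : j.p ≤ j.len := by have := j.fits; unfold Job.len; linarith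
  have hL : 0 < j.len := lt_of_lt_of_le j.p_pos hpL
  have hIvol : volume j.lifespan = ENNReal.ofReal j.len := by
    simp [Job.lifespan, Job.len, Real.volume_Icc]
  have hIfin : volume j.lifespan < ⊤ := by rw [hIvol]; exact ENNReal.ofReal_lt_top
  set B := j.lifespan ∩ T with hB
  have hBm : MeasurableSet B := measurableSet_Icc.inter hT
  have hBsub : B ⊆ j.lifespan := inter_subset_left
  have hUsub : P ∪ B ⊆ j.lifespan := union_subset hPI hBsub
  have hUfin : volume (P ∪ B) < ⊤ := lt_of_le_of_lt (measure_mono hUsub) hIfin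
  have hBfin : volume B < ⊤ := lt_of_le_of_lt (measure_mono hBsub) hIfin
  have hPfin : volume P < ⊤ := by rw [hP]; exact ENNReal.ofReal_lt_top
  have hPBfin : volume (P ∩ B) < ⊤ :=
    lt_of_le_of_lt (measure_mono inter_subset_right) hBfin
  have key : volume (P ∪ B) + volume (P ∩ B) = volume P + volume B :=
    measure_union_add_inter P hBm
  have key' : (volume (P ∪ B)).toReal + (volume (P ∩ B)).toReal
      = (volume P).toReal + (volume B).toReal := by
    rw [← ENNReal.toReal_add hUfin.ne hPBfin.ne, ← ENNReal.toReal_add hPfin.ne hBfin.ne, key]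
  have hPreal : (volume P).toReal = j.p := by
    rw [hP, ENNReal.toReal_ofReal j.p_pos.le]
  have hUle : (volume (P ∪ B)).toReal ≤ j.len := by
    have := ENNReal.toReal_mono hIfin.ne (measure_mono hUsub)
    rwa [hIvol, ENNReal.toReal_ofReal hL.le] at this
  have hPT : P ∩ B = P ∩ T := by
    rw [hB, inter_comm j.lifespan T, ← inter_assoc]
    exact inter_eq_left.2 fun x hx => hPI hx.1
  rw [← hPT]
  have hj' : α * j.len ≤ j.p := hj
  linarith
end
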